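/- arXiv:2003.01322 — 6 statements merged into one kernel-verified Lean document; each statement's English description precedes it below -/
import Mathlib

section
/- Lemma A.2 (convex-combination representation of the momentum iterates). Let E be a real vector space, let (τ_k)_{k≥0} be a nonincreasing sequence of reals with τ_k ∈ (0,1] for all k, and let (x̃^k)_{k≥0} be any sequence in E. Define (x^k)_{k≥0} by x^0 := x̃^0 and x^{k+1} := (1−τ_k)·x^k + τ_k·x̃^k + (τ_k/τ_0)·(x̃^{k+1} − x̃^k). Define coefficients γ_{k,l} for 0 ≤ l ≤ k by γ_{0,0} := 1 and, for k ≥ 0: γ_{k+1,l} := (1−τ_k)·γ_{k,l} for 0 ≤ l ≤ k−1, γ_{k+1,k} := (1−τ_k)·γ_{k,k} + τ_k − τ_k/τ_0, and γ_{k+1,k+1} := τ_k/τ_0. Then for every k ≥ 0: x^k = Σ_{l=0}^k γ_{k,l}·x̃^l; moreover γ_{k,l} ≥ 0 for all 0 ≤ l ≤ k and Σ_{l=0}^k γ_{k,l} = 1. -/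
/-- Lemma A.2: convex-combination representation of the momentum iterates. -/
theorem momentum_iterates_convex_combination {E : Type*} [AddCommGroup E] [Module ℝ E]
    (τ : ℕ → ℝ) (hτ_anti : ∀ k, τ (k + 1) ≤ τ k)
    (hτ_pos : ∀ k, 0 < τ k) (hτ_le : ∀ k, τ k ≤ 1)
    (xt x : ℕ → E) (hx0 : x 0 = xt 0)
    (hxrec : ∀ k, x (k + 1)
      = (1 - τ k) • x k + τ k • xt k + (τ k / τ 0) • (xt (k + 1) - xt k))
    (γ : ℕ → ℕ → ℝ) (hγ00 : γ 0 0 = 1)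
    (hγlow : ∀ k l, l < k → γ (k + 1) l = (1 - τ k) * γ k l)
    (hγdiag : ∀ k, γ (k + 1) k = (1 - τ k) * γ k k + τ k - τ k / τ 0)
    (hγtop : ∀ k, γ (k + 1) (k + 1) = τ k / τ 0) :
    ∀ k : ℕ, x k = ∑ l ∈ Finset.range (k + 1), γ k l • xt l
      ∧ (∀ l ≤ k, 0 ≤ γ k l)
      ∧ ∑ l ∈ Finset.range (k + 1), γ k l = 1 := by
  have hτ0 : ∀ k, τ k ≤ τ 0 := by
    intro k
    induction k with
    | zero => exact le_rfl
    | succ n ih => exact (hτ_anti n).trans ih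
  have main : ∀ k, (x k = ∑ l ∈ Finset.range (k + 1), γ k l • xt l)
      ∧ (∀ l ≤ k, 0 ≤ γ k l)
      ∧ (∑ l ∈ Finset.range (k + 1), γ k l = 1)
      ∧ τ k / τ 0 ≤ γ k k := by
    intro k
    induction k with
    | zero =>
      refine ⟨by simp [hx0, hγ00], ?_, by simp [hγ00], ?_⟩
      · intro l hl
        interval_cases l
        simp [hγ00]
      · rw [hγ00, div_self (hτ_pos 0).ne']
    | succ n ih =>
      obtain ⟨hrep, hnn, hsum, hdiag⟩ := ih
      have hτn0 : τ n ≤ τ 0 := hτ0 n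
      have hd1 : τ n / τ 0 ≤ 1 := div_le_one_of_le₀ hτn0 (hτ_pos 0).le
      have hd0 : 0 < τ n / τ 0 := div_pos (hτ_pos n) (hτ_pos 0)
      have hsum' : ∑ l ∈ Finset.range n, γ n l = 1 - γ n n := by
        rw [Finset.sum_range_succ] at hsum; linarith
      have hdiag1 : 0 ≤ γ (n + 1) n := by
        rw [hγdiag n]
        nlinarith [hτ_le n, hτ_pos n, hτ_pos 0]
      refine ⟨?_, ?_, ?_, ?_⟩
      · rw [hxrec n, Finset.sum_range_succ, Finset.sum_range_succ,
          Finset.sum_congr rfl (fun l hl => by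
            rw [hγlow n l (Finset.mem_range.mp hl)]),
          hγtop n, hγdiag n, hrep, Finset.sum_range_succ]
        simp only [mul_smul, ← Finset.smul_sum]
        module
      · intro l hl
        rcases lt_or_eq_of_le hl with h | h
        · rcases lt_or_eq_of_le (Nat.lt_succ_iff.mp h) with h' | h'
          · rw [hγlow n l h']
            exact mul_nonneg (by linarith [hτ_le n]) (hnn l h'.le)
          · subst h'; exact hdiag1
        · subst h; rw [hγtop n]; exact hd0.le
      · rw [Finset.sum_range_succ, Finset.sum_range_succ,
          Finset.sum_congr rfl (fun l hl => by
            rw [hγlow n l (Finset.mem_range.mp hl)]),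
          hγtop n, hγdiag n, ← Finset.mul_sum, hsum']
        ring
      · rw [hγtop n]
        gcongr
        · exact (hτ_pos 0).le
        · exact hτ_anti n
  exact fun k => ⟨(main k).1, (main k).2.1, (main k).2.2.1⟩
end

section
/- Properties of the accelerated parameter sequence. Let τ_0 ∈ (0,1] and define recursively τ_k := (τ_{k−1}/2)·(√(τ_{k−1}² + 4) − τ_{k−1}) for k ≥ 1. Then: (i) τ_k ∈ (0,1) for all k ≥ 1 and 1 − τ_k = τ_k²/τ_{k−1}² for all k ≥ 1, so the sequence (τ_k) is strictly decreasing; (ii) τ_0/(τ_0·k + 1) ≤ τ_k ≤ 2τ_0/(τ_0·k + 2) for every k ≥ 0; (iii) ∏_{i=1}^k (1 − τ_i) = τ_k²/τ_0² ≤ 4/(τ_0·k + 2)² for every k ≥ 0 (with the empty product equal to 1 for k = 0). -/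
/-!
Squaring the recursion gives `τ_{k+1}² = τ_k² (1 - τ_{k+1})`, which is the factor identity of (i)
and makes the product in (iii) telescope. Rewritten for the reciprocals it reads
`1/τ_{k+1} - 1/τ_k = τ_k / (τ_k + τ_{k+1}) ∈ [1/2, 1]`, so `1/τ_k` grows at least like `k/2` and at
most like `k`; inverting these bounds gives (ii), and squaring the upper one gives (iii).
-/

open Finset

noncomputable def accelStep (t : ℝ) : ℝ := t / 2 * (√(t ^ 2 + 4) - t)

lemma accelStep_pos {t : ℝ} (ht : 0 < t) : 0 < accelStep t := by
  have hsqrt : t < √(t ^ 2 + 4) := Real.lt_sqrt_of_sq_lt (by linarith)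
  unfold accelStep
  nlinarith

lemma accelStep_sq (t : ℝ) : accelStep t ^ 2 = t ^ 2 * (1 - accelStep t) := by
  have hsqrt := Real.sq_sqrt (show (0 : ℝ) ≤ t ^ 2 + 4 by positivity)
  unfold accelStep
  linear_combination (t ^ 2 / 4) * hsqrt

section Step

variable {a b : ℝ}

lemma lt_one_of_sq_eq_sq_mul_one_sub (hb : 0 < b) (h : b ^ 2 = a ^ 2 * (1 - b)) : b < 1 := by
  nlinarith [pow_pos hb 2, sq_nonneg a]

variable (ha : 0 < a) (hb : 0 < b) (h : b ^ 2 = a ^ 2 * (1 - b))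
include ha hb h

lemma lt_of_sq_eq_sq_mul_one_sub : b < a := by
  nlinarith [mul_pos (pow_pos ha 2) hb]

lemma inv_sub_inv_eq_of_sq_eq_sq_mul_one_sub : b⁻¹ - a⁻¹ = a / (a + b) := by
  rw [inv_sub_inv hb.ne' ha.ne', div_eq_div_iff (by positivity) (by positivity)]
  linear_combination -h

lemma inv_sub_inv_mem_Icc_of_sq_eq_sq_mul_one_sub : b⁻¹ - a⁻¹ ∈ Set.Icc (1 / 2) 1 := by
  have hba := lt_of_sq_eq_sq_mul_one_sub ha hb h
  rw [inv_sub_inv_eq_of_sq_eq_sq_mul_one_sub ha hb h, Set.mem_Icc,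
    div_le_div_iff₀ two_pos (by positivity), div_le_one (by positivity)]
  constructor <;> linarith

end Step

section Sequence

variable {τ : ℕ → ℝ} (hpos : ∀ k, 0 < τ k) (hsq : ∀ k, τ (k + 1) ^ 2 = τ k ^ 2 * (1 - τ (k + 1)))
include hpos hsq

lemma inv_mem_Icc_of_sq_eq_sq_mul_one_sub (k : ℕ) :
    (τ k)⁻¹ ∈ Set.Icc ((τ 0)⁻¹ + k / 2) ((τ 0)⁻¹ + k) := by
  induction k with
  | zero => simp
  | succ k ih =>
    obtain ⟨hlo, hhi⟩ :=
      inv_sub_inv_mem_Icc_of_sq_eq_sq_mul_one_sub (hpos k) (hpos (k + 1)) (hsq k)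
    push_cast
    constructor <;> linarith [ih.1, ih.2]

lemma mem_Icc_of_sq_eq_sq_mul_one_sub (k : ℕ) :
    τ k ∈ Set.Icc (τ 0 / (τ 0 * k + 1)) (2 * τ 0 / (τ 0 * k + 2)) := by
  have h0 := hpos 0
  obtain ⟨hlo, hhi⟩ := inv_mem_Icc_of_sq_eq_sq_mul_one_sub hpos hsq k
  have hlo_eq : τ 0 / (τ 0 * k + 1) = ((τ 0)⁻¹ + k)⁻¹ := by field_simp; ring
  have hhi_eq : 2 * τ 0 / (τ 0 * k + 2) = ((τ 0)⁻¹ + k / 2)⁻¹ := by field_simp; ring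
  rw [hlo_eq, hhi_eq, ← inv_inv (τ k)]
  exact ⟨inv_anti₀ (inv_pos.2 (hpos k)) hhi, inv_anti₀ (by positivity) hlo⟩

lemma prod_Icc_one_sub_eq_of_sq_eq_sq_mul_one_sub (k : ℕ) :
    ∏ i ∈ Icc 1 k, (1 - τ i) = τ k ^ 2 / τ 0 ^ 2 := by
  induction k with
  | zero => simp [(hpos 0).ne']
  | succ k ih =>
    have hk := (hpos k).ne'
    have h0 := (hpos 0).ne'
    rw [prod_Icc_succ_top (by omega), ih, hsq k]
    field_simp

end Sequence

theorem accelerated_param_sequence_properties_general (τ : ℕ → ℝ)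
    (hτ0_pos : 0 < τ 0)
    (hτrec : ∀ k, τ (k + 1) = τ k / 2 * (Real.sqrt (τ k ^ 2 + 4) - τ k)) :
    (∀ k ≥ 1, 0 < τ k ∧ τ k < 1)
    ∧ (∀ k, 1 - τ (k + 1) = τ (k + 1) ^ 2 / τ k ^ 2)
    ∧ StrictAnti τ
    ∧ (∀ k : ℕ, τ 0 / (τ 0 * k + 1) ≤ τ k ∧ τ k ≤ 2 * τ 0 / (τ 0 * k + 2))
    ∧ (∀ k : ℕ, ∏ i ∈ Finset.Icc 1 k, (1 - τ i) = τ k ^ 2 / τ 0 ^ 2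
        ∧ τ k ^ 2 / τ 0 ^ 2 ≤ 4 / (τ 0 * k + 2) ^ 2) := by
  have hstep : ∀ k, τ (k + 1) = accelStep (τ k) := hτrec
  have hpos : ∀ k, 0 < τ k := fun k =>
    Nat.rec hτ0_pos (fun k ih => hstep k ▸ accelStep_pos ih) k
  have hsq : ∀ k, τ (k + 1) ^ 2 = τ k ^ 2 * (1 - τ (k + 1)) := fun k =>
    hstep k ▸ accelStep_sq (τ k)
  have hbounds := mem_Icc_of_sq_eq_sq_mul_one_sub hpos hsq
  refine ⟨?_, fun k => ?_, strictAnti_nat_of_succ_lt fun k =>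
      lt_of_sq_eq_sq_mul_one_sub (hpos k) (hpos (k + 1)) (hsq k),
    hbounds, fun k => ⟨prod_Icc_one_sub_eq_of_sq_eq_sq_mul_one_sub hpos hsq k, ?_⟩⟩
  · rintro (_ | k) hk
    · omega
    · exact ⟨hpos _, lt_one_of_sq_eq_sq_mul_one_sub (hpos (k + 1)) (hsq k)⟩
  · rw [hsq k, mul_div_cancel_left₀ _ (pow_pos (hpos k) 2).ne']
  · have hratio : τ k / τ 0 ≤ 2 / (τ 0 * k + 2) :=
      calc τ k / τ 0 ≤ 2 * τ 0 / (τ 0 * k + 2) / τ 0 :=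
            div_le_div_of_nonneg_right (hbounds k).2 hτ0_pos.le
        _ = 2 / (τ 0 * k + 2) := by field_simp
    rw [← div_pow, show (4 : ℝ) / (τ 0 * k + 2) ^ 2 = (2 / (τ 0 * k + 2)) ^ 2 by
      rw [div_pow]; norm_num]
    exact pow_le_pow_left₀ (div_pos (hpos k) hτ0_pos).le hratio 2

/-- Properties of the accelerated parameter sequence
`τ_k = (τ_{k−1}/2)·(√(τ_{k−1}² + 4) − τ_{k−1})`. -/
theorem accelerated_param_sequence_properties (τ : ℕ → ℝ)
    (hτ0_pos : 0 < τ 0) (hτ0_le : τ 0 ≤ 1)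
    (hτrec : ∀ k, τ (k + 1) = τ k / 2 * (Real.sqrt (τ k ^ 2 + 4) - τ k)) :
    (∀ k ≥ 1, 0 < τ k ∧ τ k < 1)
    ∧ (∀ k, 1 - τ (k + 1) = τ (k + 1) ^ 2 / τ k ^ 2)
    ∧ StrictAnti τ
    ∧ (∀ k : ℕ, τ 0 / (τ 0 * k + 1) ≤ τ k ∧ τ k ≤ 2 * τ 0 / (τ 0 * k + 2))
    ∧ (∀ k : ℕ, ∏ i ∈ Finset.Icc 1 k, (1 - τ i) = τ k ^ 2 / τ 0 ^ 2
        ∧ τ k ^ 2 / τ 0 ^ 2 ≤ 4 / (τ 0 * k + 2) ^ 2) :=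
  accelerated_param_sequence_properties_general τ hτ0_pos hτrec
end

section
/- Weighted quadratic upper bound for the augmented coupling term. Let H₁ := E_1 × ⋯ × E_n be the l²-product of real Hilbert spaces E_j (so ‖u‖² = Σ_{j=1}^n ‖u_j‖²), let H₂ be a real Hilbert space, K : H₁ → H₂ a continuous linear map with adjoint K*, y ∈ H₂ and ρ ≥ 0. Define ψ_ρ(x, r) := ⟨y, Kx − r⟩ + (ρ/2)·‖Kx − r‖². Let σ_1,…,σ_n > 0 and L̄ ≥ 0 satisfy ‖Ku‖² ≤ L̄·Σ_{j=1}^n σ_j·‖u_j‖² for all u ∈ H₁. Then for all x, x̂ ∈ H₁ and all r, r̂ ∈ H₂: ψ_ρ(x̂, r̂) ≤ ψ_ρ(x, r) + ⟨−y + ρ·(r − Kx), r̂ − r⟩ + ⟨K*(y + ρ·(Kx − r)), x̂ − x⟩ + ρ·‖r̂ − r‖² + ρ·L̄·Σ_{j=1}^n σ_j·‖x̂_j − x_j‖². -/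
/-!
Write `a = K x - r` and `d = K (x̂ - x) - (r̂ - r)`, so that `K x̂ - r̂ = a + d`. Expanding the
augmented term at `a + d` gives its value at `a`, the linear term `⟪y + ρ a, d⟫`, which the adjoint
splits into the two inner products of the claim, and the remainder `ρ/2 ‖d‖²`. Finally
`‖d‖² ≤ 2 ‖K (x̂ - x)‖² + 2 ‖r̂ - r‖²`, and the weighted bound on `K` controls the first summand.
-/

open scoped RealInnerProductSpace

noncomputable instance PiLp.instCompleteSpaceOfBlocks {n : ℕ} {E : Fin n → Type*}
    [∀ j, NormedAddCommGroup (E j)] [∀ j, CompleteSpace (E j)] :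
    CompleteSpace (PiLp 2 E) :=
  by infer_instance

theorem inner_add_half_mul_norm_add_sq {F : Type*} [NormedAddCommGroup F] [InnerProductSpace ℝ F]
    (y a d : F) (ρ : ℝ) :
    ⟪y, a + d⟫ + ρ / 2 * ‖a + d‖ ^ 2
      = ⟪y, a⟫ + ρ / 2 * ‖a‖ ^ 2 + ⟪y + ρ • a, d⟫ + ρ / 2 * ‖d‖ ^ 2 := by
  rw [norm_add_sq_real, inner_add_right, inner_add_left, real_inner_smul_left]
  ring

theorem norm_sub_sq_le_two_mul {F : Type*} [SeminormedAddCommGroup F] (u v : F) :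
    ‖u - v‖ ^ 2 ≤ 2 * ‖u‖ ^ 2 + 2 * ‖v‖ ^ 2 :=
  calc ‖u - v‖ ^ 2 ≤ (‖u‖ + ‖v‖) ^ 2 := by gcongr; exact norm_sub_le u v
    _ ≤ 2 * ‖u‖ ^ 2 + 2 * ‖v‖ ^ 2 := by linarith [add_sq_le (a := ‖u‖) (b := ‖v‖)]

theorem ContinuousLinearMap.inner_apply_sub_eq_adjoint {H₁ H₂ : Type*}
    [NormedAddCommGroup H₁] [InnerProductSpace ℝ H₁] [CompleteSpace H₁]
    [NormedAddCommGroup H₂] [InnerProductSpace ℝ H₂] [CompleteSpace H₂]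
    (K : H₁ →L[ℝ] H₂) (w : H₂) (u : H₁) (v : H₂) :
    ⟪w, K u - v⟫ = ⟪-w, v⟫ + ⟪ContinuousLinearMap.adjoint K w, u⟫ := by
  rw [ContinuousLinearMap.adjoint_inner_left, inner_sub_right, inner_neg_left]
  ring

theorem augmented_coupling_quadratic_upper_bound_general {n : ℕ} {E : Fin n → Type*}
    [∀ j, NormedAddCommGroup (E j)] [∀ j, InnerProductSpace ℝ (E j)]
    [∀ j, CompleteSpace (E j)]
    {H₂ : Type*} [NormedAddCommGroup H₂] [InnerProductSpace ℝ H₂] [CompleteSpace H₂]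
    (K : PiLp 2 E →L[ℝ] H₂) (y : H₂) (ρ : ℝ) (hρ : 0 ≤ ρ)
    (ψ : PiLp 2 E → H₂ → ℝ)
    (hψ : ∀ x r, ψ x r = ⟪y, K x - r⟫ + ρ / 2 * ‖K x - r‖ ^ 2)
    (σ : Fin n → ℝ) (L : ℝ)
    (hK : ∀ u : PiLp 2 E, ‖K u‖ ^ 2 ≤ L * ∑ j, σ j * ‖u j‖ ^ 2) :
    ∀ (x xhat : PiLp 2 E) (r rhat : H₂),
      ψ xhat rhat ≤ ψ x r + ⟪-y + ρ • (r - K x), rhat - r⟫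
        + ⟪ContinuousLinearMap.adjoint K (y + ρ • (K x - r)), xhat - x⟫
        + ρ * ‖rhat - r‖ ^ 2 + ρ * L * ∑ j, σ j * ‖xhat j - x j‖ ^ 2 := by
  intro x xhat r rhat
  have hsplit : K xhat - rhat = (K x - r) + (K (xhat - x) - (rhat - r)) := by
    rw [map_sub]; abel
  have hlin : ⟪y + ρ • (K x - r), K (xhat - x) - (rhat - r)⟫
      = ⟪-y + ρ • (r - K x), rhat - r⟫
        + ⟪ContinuousLinearMap.adjoint K (y + ρ • (K x - r)), xhat - x⟫ := by
    rw [K.inner_apply_sub_eq_adjoint, neg_add, ← smul_neg, neg_sub]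
  have hquad : ‖K (xhat - x) - (rhat - r)‖ ^ 2
      ≤ 2 * (L * ∑ j, σ j * ‖xhat j - x j‖ ^ 2) + 2 * ‖rhat - r‖ ^ 2 := by
    have hKdiff := hK (xhat - x)
    simp only [PiLp.sub_apply] at hKdiff
    linarith [norm_sub_sq_le_two_mul (K (xhat - x)) (rhat - r)]
  rw [hψ, hψ, hsplit, inner_add_half_mul_norm_add_sq, hlin]
  linarith [mul_le_mul_of_nonneg_left hquad hρ]

/-- Weighted quadratic upper bound for the augmented coupling term on an
`l²`-product of Hilbert spaces. -/
theorem augmented_coupling_quadratic_upper_bound {n : ℕ} {E : Fin n → Type*}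
    [∀ j, NormedAddCommGroup (E j)] [∀ j, InnerProductSpace ℝ (E j)]
    [∀ j, CompleteSpace (E j)]
    {H₂ : Type*} [NormedAddCommGroup H₂] [InnerProductSpace ℝ H₂] [CompleteSpace H₂]
    (K : PiLp 2 E →L[ℝ] H₂) (y : H₂) (ρ : ℝ) (hρ : 0 ≤ ρ)
    (ψ : PiLp 2 E → H₂ → ℝ)
    (hψ : ∀ x r, ψ x r = ⟪y, K x - r⟫ + ρ / 2 * ‖K x - r‖ ^ 2)
    (σ : Fin n → ℝ) (hσ : ∀ j, 0 < σ j) (L : ℝ) (hL : 0 ≤ L)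
    (hK : ∀ u : PiLp 2 E, ‖K u‖ ^ 2 ≤ L * ∑ j, σ j * ‖u j‖ ^ 2) :
    ∀ (x xhat : PiLp 2 E) (r rhat : H₂),
      ψ xhat rhat ≤ ψ x r + ⟪-y + ρ • (r - K x), rhat - r⟫
        + ⟪ContinuousLinearMap.adjoint K (y + ρ • (K x - r)), xhat - x⟫
        + ρ * ‖rhat - r‖ ^ 2 + ρ * L * ∑ j, σ j * ‖xhat j - x j‖ ^ 2 :=
  augmented_coupling_quadratic_upper_bound_general K y ρ hρ ψ hψ σ L hK
end

section
/- Key proximal descent inequality (per-block estimate). Let E be a real inner product space, μ ≥ 0, and let φ : E → ℝ be a convex function such that φ − (μ/2)·‖·‖² is convex. Let g ∈ E, s > 0, θ ∈ (0,1], and x̃, x ∈ E, and suppose x⁺ ∈ E minimizes the function u ↦ φ(u) + ⟨g, u⟩ + (s/2)·‖u − x̃‖² over E. Then φ(x⁺) ≤ (1−θ)·φ(x̃) + θ·φ(x) − (θ·μ/2)·‖x⁺ − x‖² + (s·θ/2)·(‖x − x̃‖² − ‖x − x⁺‖²) − (s/2)·‖x̃ − x⁺‖² + ⟨g, (1−θ)·x̃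 + θ·x − x⁺⟩. -/
open scoped RealInnerProductSpace

private lemma norm_combo_sq {E : Type*} [NormedAddCommGroup E] [InnerProductSpace ℝ E]
    (a b : E) (t : ℝ) :
    ‖(1 - t) • a + t • b‖ ^ 2
      = (1 - t) * ‖a‖ ^ 2 + t * ‖b‖ ^ 2 - t * (1 - t) * ‖a - b‖ ^ 2 := by
  simp only [← real_inner_self_eq_norm_sq, inner_add_add_self, inner_sub_sub_self,
    real_inner_smul_left, real_inner_smul_right]
  ring

/-- A minimizer of a `(μ+s)`-strongly convex function satisfies the quadratic growth bound. -/
private lemma strong_min {E : Type*} [NormedAddCommGroup E]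
    [InnerProductSpace ℝ E] (μ : ℝ) (hμ : 0 ≤ μ) (φ : E → ℝ)
    (hφμ : ConvexOn ℝ Set.univ (fun u => φ u - μ / 2 * ‖u‖ ^ 2))
    (g : E) (s : ℝ) (hs : 0 < s) (xt xp : E)
    (hxp : ∀ u : E, φ xp + ⟪g, xp⟫ + s / 2 * ‖xp - xt‖ ^ 2
      ≤ φ u + ⟪g, u⟫ + s / 2 * ‖u - xt‖ ^ 2) (u : E) :
    φ xp + ⟪g, xp⟫ + s / 2 * ‖xp - xt‖ ^ 2 + (μ + s) / 2 * ‖u - xp‖ ^ 2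
      ≤ φ u + ⟪g, u⟫ + s / 2 * ‖u - xt‖ ^ 2 := by
  have hN : (0:ℝ) ≤ ‖u - xp‖ ^ 2 := sq_nonneg _
  have hm : (0:ℝ) ≤ μ + s := by linarith
  have step : ∀ t : ℝ, 0 < t → t < 1 →
      φ xp + ⟪g, xp⟫ + s / 2 * ‖xp - xt‖ ^ 2 + (μ + s) / 2 * (1 - t) * ‖u - xp‖ ^ 2
        ≤ φ u + ⟪g, u⟫ + s / 2 * ‖u - xt‖ ^ 2 := by
    intro t ht0 ht1
    set v : E := (1 - t) • xp + t • u with hv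
    have hconv := hφμ.2 (Set.mem_univ xp) (Set.mem_univ u)
      (by linarith : (0:ℝ) ≤ 1 - t) (le_of_lt ht0) (by ring)
    simp only [smul_eq_mul] at hconv
    rw [← hv] at hconv
    have hnv : ‖v‖ ^ 2 = (1 - t) * ‖xp‖ ^ 2 + t * ‖u‖ ^ 2 - t * (1 - t) * ‖xp - u‖ ^ 2 :=
      norm_combo_sq xp u t
    have hvxt : v - xt = (1 - t) • (xp - xt) + t • (u - xt) := by
      rw [hv]; module
    have hnvxt : ‖v - xt‖ ^ 2
        = (1 - t) * ‖xp - xt‖ ^ 2 + t * ‖u - xt‖ ^ 2 - t * (1 - t) * ‖xp - u‖ ^ 2 := by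
      rw [hvxt]
      have := norm_combo_sq (xp - xt) (u - xt) t
      simpa using this
    have hgv : ⟪g, v⟫ = (1 - t) * ⟪g, xp⟫ + t * ⟪g, u⟫ := by
      rw [hv, inner_add_right, real_inner_smul_right, real_inner_smul_right]
    have hxpu : ‖xp - u‖ ^ 2 = ‖u - xp‖ ^ 2 := by rw [← norm_neg]; congr 1; abel_nf
    rw [hxpu] at hnvxt hnv
    rw [hnv] at hconv
    have hmin := hxp v
    rw [hgv, hnvxt] at hmin
    have hφv : φ v ≤ (1 - t) * φ xp + t * φ u - μ / 2 * (t * (1 - t)) * ‖u - xp‖ ^ 2 := by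
      linarith [hconv]
    have h3 : t * (φ xp + ⟪g, xp⟫ + s / 2 * ‖xp - xt‖ ^ 2
          + (μ + s) / 2 * (1 - t) * ‖u - xp‖ ^ 2)
        ≤ t * (φ u + ⟪g, u⟫ + s / 2 * ‖u - xt‖ ^ 2) := by
      nlinarith [hmin, hφv]
    exact le_of_mul_le_mul_left h3 ht0
  apply le_of_forall_pos_le_add
  intro ε hε
  set C : ℝ := (μ + s) / 2 * ‖u - xp‖ ^ 2 with hC
  have hC0 : 0 ≤ C := mul_nonneg (by linarith) hN
  set t : ℝ := min (1/2) (ε / (C + 1)) with htdef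
  have ht0 : 0 < t := lt_min (by norm_num) (div_pos hε (by linarith))
  have ht1 : t < 1 := lt_of_le_of_lt (min_le_left _ _) (by norm_num)
  have h := step t ht0 ht1
  have htC : t * C ≤ ε := by
    have h1 : t ≤ ε / (C + 1) := min_le_right _ _
    have h2 : t * C ≤ ε / (C + 1) * C := mul_le_mul_of_nonneg_right h1 hC0
    have h4 : ε / (C + 1) * C ≤ ε := by
      rw [div_mul_eq_mul_div, div_le_iff₀ (by linarith)]
      nlinarith
    linarith
  have hexp : (μ + s) / 2 * (1 - t) * ‖u - xp‖ ^ 2 = C - t * C := by rw [hC]; ring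
  linarith [h, hexp.ge, hexp.le]

/-- Key proximal descent inequality (per-block estimate). -/
theorem proximal_descent_inequality {E : Type*} [NormedAddCommGroup E]
    [InnerProductSpace ℝ E] (μ : ℝ) (hμ : 0 ≤ μ) (φ : E → ℝ)
    (hφ : ConvexOn ℝ Set.univ φ)
    (hφμ : ConvexOn ℝ Set.univ (fun u => φ u - μ / 2 * ‖u‖ ^ 2))
    (g : E) (s : ℝ) (hs : 0 < s) (θ : ℝ) (hθ₀ : 0 < θ) (hθ₁ : θ ≤ 1)
    (xt x xp : E)
    (hxp : ∀ u : E, φ xp + ⟪g, xp⟫ + s / 2 * ‖xp - xt‖ ^ 2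
      ≤ φ u + ⟪g, u⟫ + s / 2 * ‖u - xt‖ ^ 2) :
    φ xp ≤ (1 - θ) * φ xt + θ * φ x - θ * μ / 2 * ‖xp - x‖ ^ 2
      + s * θ / 2 * (‖x - xt‖ ^ 2 - ‖x - xp‖ ^ 2) - s / 2 * ‖xt - xp‖ ^ 2
      + ⟪g, (1 - θ) • xt + θ • x - xp⟫ := by
  set u : E := (1 - θ) • xt + θ • x with hu
  have hmain := strong_min μ hμ φ hφμ g s hs xt xp hxp u
  have hconv := hφμ.2 (Set.mem_univ xt) (Set.mem_univ x)
    (by linarith : (0:ℝ) ≤ 1 - θ) (le_of_lt hθ₀) (by ring)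
  simp only [smul_eq_mul] at hconv
  rw [← hu] at hconv
  have hnu : ‖u‖ ^ 2 = (1 - θ) * ‖xt‖ ^ 2 + θ * ‖x‖ ^ 2 - θ * (1 - θ) * ‖xt - x‖ ^ 2 :=
    norm_combo_sq xt x θ
  rw [hnu] at hconv
  have hφu : φ u ≤ (1 - θ) * φ xt + θ * φ x - μ / 2 * (θ * (1 - θ)) * ‖xt - x‖ ^ 2 := by
    linarith [hconv]
  have hkey : s / 2 * ‖u - xt‖ ^ 2 - s / 2 * ‖xp - xt‖ ^ 2 - (μ + s) / 2 * ‖u - xp‖ ^ 2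
        - μ / 2 * (θ * (1 - θ)) * ‖xt - x‖ ^ 2
      = - (θ * μ / 2) * ‖xp - x‖ ^ 2 + s * θ / 2 * (‖x - xt‖ ^ 2 - ‖x - xp‖ ^ 2)
        - s / 2 * ‖xt - xp‖ ^ 2 - (μ + s) / 2 * (1 - θ) * ‖xt - xp‖ ^ 2 := by
    rw [hu]
    simp only [← real_inner_self_eq_norm_sq, inner_sub_sub_self, inner_add_add_self,
      inner_sub_left, inner_sub_right, inner_add_left, inner_add_right,
      real_inner_smul_left, real_inner_smul_right, real_inner_comm xt x,
      real_inner_comm xt xp, real_inner_comm x xp]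
    ring
  have hslack : 0 ≤ (μ + s) / 2 * (1 - θ) * ‖xt - xp‖ ^ 2 :=
    mul_nonneg (mul_nonneg (by linarith) (by linarith)) (sq_nonneg _)
  rw [show u - xp = u - xp from rfl] at hmain
  rw [inner_sub_right (𝕜 := ℝ) g u xp] at *
  linarith [hmain, hφu, hkey.le, hkey.ge, hslack]
end

section
/- Strong-convexity interpolation estimate. Let E be a real inner product space, μ ≥ 0, and let f : E → ℝ be a convex function such that f − (μ/2)·‖·‖² is convex. Then for all a, b, c ∈ E and all θ ∈ [0,1]: f((1−θ)·a + θ·c) − (μ/2)·‖b − ((1−θ)·a + θ·c)‖² ≤ (1−θ)·f(a) + θ·f(c) − (θ·μ/2)·‖b − c‖². -/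
open InnerProductSpace in


/-- Strong-convexity interpolation estimate. -/
theorem strong_convexity_interpolation {E : Type*} [NormedAddCommGroup E]
    [InnerProductSpace ℝ E] (μ : ℝ) (hμ : 0 ≤ μ) (f : E → ℝ)
    (hf : ConvexOn ℝ Set.univ f)
    (hfμ : ConvexOn ℝ Set.univ (fun u => f u - μ / 2 * ‖u‖ ^ 2))
    (a b c : E) (θ : ℝ) (hθ₀ : 0 ≤ θ) (hθ₁ : θ ≤ 1) :
    f ((1 - θ) • a + θ • c) - μ / 2 * ‖b - ((1 - θ) • a + θ • c)‖ ^ 2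
      ≤ (1 - θ) * f a + θ * f c - θ * μ / 2 * ‖b - c‖ ^ 2 := by
  have key := hfμ.2 (Set.mem_univ a) (Set.mem_univ c)
    (by linarith : (0:ℝ) ≤ 1 - θ) hθ₀ (by ring)
  simp only [smul_eq_mul] at key
  have e1 : ‖b - ((1 - θ) • a + θ • c)‖ ^ 2
      = ⟪b - ((1 - θ) • a + θ • c), b - ((1 - θ) • a + θ • c)⟫_ℝ :=
    (real_inner_self_eq_norm_sq _).symm
  have e2 : ‖b - c‖ ^ 2 = ⟪b - c, b - c⟫_ℝ := (real_inner_self_eq_norm_sq _).symm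
  have e3 : ‖a‖ ^ 2 = ⟪a, a⟫_ℝ := (real_inner_self_eq_norm_sq _).symm
  have e4 : ‖c‖ ^ 2 = ⟪c, c⟫_ℝ := (real_inner_self_eq_norm_sq _).symm
  have e5 : ‖(1 - θ) • a + θ • c‖ ^ 2
      = ⟪(1 - θ) • a + θ • c, (1 - θ) • a + θ • c⟫_ℝ :=
    (real_inner_self_eq_norm_sq _).symm
  have hab : (0:ℝ) ≤ ⟪a - b, a - b⟫_ℝ := real_inner_self_nonneg
  simp only [inner_sub_left, inner_sub_right, inner_add_left, inner_add_right,
    inner_smul_left, inner_smul_right, RCLike.conj_to_real] at *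
  rw [e1, e2]
  rw [e3, e4, e5] at key
  nlinarith [real_inner_comm a b, real_inner_comm a c, real_inner_comm b c,
    mul_nonneg (mul_nonneg (by linarith : (0:ℝ) ≤ 1 - θ) hμ) hab]
end

section
/- Gradient interpolation estimate for a smooth strongly convex function. Let E be a real inner product space, μ ≥ 0, and let h : E → ℝ be differentiable with gradient ∇h and such that h − (μ/2)·‖·‖² is convex. Let τ ∈ [0,1], let a, x̃, x ∈ E, and set x̂ := (1−τ)·a + τ·x̃. Then h(x̂) + τ·⟨∇h(x̂), x − x̃⟩ ≤ (1−τ)·h(a) + τ·h(x) − (μ·τ²/2)·‖x̃ − x‖² − (μ·(1−τ)·τ/2)·‖a − x‖². -/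
/-!
Convexity of `h - (μ/2)‖·‖²` gives the strong-convexity lower bound
`h y ≥ h z + ⟪∇h z, y - z⟫ + (μ/2)‖y - z‖²`. Applying it at `z = x̂` with `y = a` and `y = x`
and averaging with weights `1 - τ` and `τ`, the gradient terms combine to `τ ⟪∇h x̂, x - x̃⟫`,
and the identity `(1-τ)‖u‖² + τ‖v‖² = ‖(1-τ)u + τv‖² + (1-τ)τ‖u - v‖²` turns the quadratic terms
into the two on the right-hand side.
-/

open scoped RealInnerProductSpace

open AffineMap in
theorem ConvexOn.add_fderiv_sub_le {F : Type*} [NormedAddCommGroup F] [NormedSpace ℝ F]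
    {g : F → ℝ} {g' : F →L[ℝ] ℝ} {z : F} (hg : ConvexOn ℝ Set.univ g)
    (hz : HasFDerivAt g g' z) (y : F) : g z + g' (y - z) ≤ g y := by
  let ℓ : ℝ →ᵃ[ℝ] F := lineMap z y
  have hline : ConvexOn ℝ Set.univ (g ∘ ℓ) := hg.comp_affineMap ℓ
  have hderiv : HasDerivAt (g ∘ ℓ) (g' (y - z)) 0 := by
    rw [← lineMap_apply_zero z y (k := ℝ)] at hz
    exact hz.comp_hasDerivAt 0 hasDerivAt_lineMap
  calc g z + g' (y - z)
      ≤ g z + slope (g ∘ ℓ) 0 1 := by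
        gcongr
        exact hline.le_slope_of_hasDerivAt (Set.mem_univ 0) (Set.mem_univ 1) zero_lt_one hderiv
    _ = g y := by simp [slope_def_field, ℓ]

theorem add_inner_add_half_mul_norm_sq_le_of_convexOn_sub {E : Type*} [NormedAddCommGroup E]
    [InnerProductSpace ℝ E] [CompleteSpace E] {μ : ℝ} {h : E → ℝ} {h' z : E}
    (hconv : ConvexOn ℝ Set.univ (fun u => h u - μ / 2 * ‖u‖ ^ 2))
    (hz : HasGradientAt h h' z) (y : E) :
    h z + ⟪h', y - z⟫ + μ / 2 * ‖y - z‖ ^ 2 ≤ h y := by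
  have hderiv := (hasGradientAt_iff_hasFDerivAt.mp hz).sub
    ((hasStrictFDerivAt_norm_sq z).hasFDerivAt.const_mul (μ / 2))
  have := hconv.add_fderiv_sub_le hderiv y
  simp only [sub_apply, InnerProductSpace.toDual_apply_apply,
    smul_apply, innerSL_apply_apply, real_inner_self_eq_norm_sq, inner_sub_right,
    nsmul_eq_mul, Nat.cast_ofNat, smul_eq_mul] at this
  rw [norm_sub_sq_real, inner_sub_right, real_inner_comm z y]
  linarith

theorem norm_one_sub_smul_add_smul_sq {E : Type*} [NormedAddCommGroup E]
    [InnerProductSpace ℝ E] (τ : ℝ) (u v : E) :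
    ‖(1 - τ) • u + τ • v‖ ^ 2 = (1 - τ) * ‖u‖ ^ 2 + τ * ‖v‖ ^ 2 - (1 - τ) * τ * ‖u - v‖ ^ 2 := by
  rw [norm_add_sq_real, norm_sub_sq_real, norm_smul, norm_smul, inner_smul_left, inner_smul_right]
  simp only [Real.norm_eq_abs, mul_pow, sq_abs, conj_trivial]
  ring

theorem gradient_interpolation_estimate_general {E : Type*} [NormedAddCommGroup E]
    [InnerProductSpace ℝ E] [CompleteSpace E] (μ : ℝ)
    (h : E → ℝ) (h' : E → E) (hdiff : ∀ z, HasGradientAt h (h' z) z)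
    (hμconv : ConvexOn ℝ Set.univ (fun u => h u - μ / 2 * ‖u‖ ^ 2))
    (τ : ℝ) (hτ₀ : 0 ≤ τ) (hτ₁ : τ ≤ 1) (a xt x : E) (xhat : E)
    (hxhat : xhat = (1 - τ) • a + τ • xt) :
    h xhat + τ * ⟪h' xhat, x - xt⟫
      ≤ (1 - τ) * h a + τ * h x - μ * τ ^ 2 / 2 * ‖xt - x‖ ^ 2
        - μ * (1 - τ) * τ / 2 * ‖a - x‖ ^ 2 := by
  have ha := add_inner_add_half_mul_norm_sq_le_of_convexOn_sub hμconv (hdiff xhat) a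
  have hx := add_inner_add_half_mul_norm_sq_le_of_convexOn_sub hμconv (hdiff xhat) x
  have hcomb : (1 - τ) • (a - xhat) + τ • (x - xhat) = τ • (x - xt) := by
    rw [hxhat]; module
  have hinner :
      (1 - τ) * ⟪h' xhat, a - xhat⟫ + τ * ⟪h' xhat, x - xhat⟫ = τ * ⟪h' xhat, x - xt⟫ := by
    rw [← inner_smul_right, ← inner_smul_right, ← inner_add_right, hcomb, inner_smul_right]
  have hnorm := norm_one_sub_smul_add_smul_sq τ (a - xhat) (x - xhat)
  rw [hcomb, norm_smul, sub_sub_sub_cancel_right, norm_sub_rev x xt] at hnorm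
  simp only [Real.norm_eq_abs, mul_pow, sq_abs] at hnorm
  linear_combination (1 - τ) * ha + τ * hx - hinner + μ / 2 * hnorm

/-- Gradient interpolation estimate for a smooth strongly convex function. -/
theorem gradient_interpolation_estimate {E : Type*} [NormedAddCommGroup E]
    [InnerProductSpace ℝ E] [CompleteSpace E] (μ : ℝ) (hμ : 0 ≤ μ)
    (h : E → ℝ) (h' : E → E) (hdiff : ∀ z, HasGradientAt h (h' z) z)
    (hμconv : ConvexOn ℝ Set.univ (fun u => h u - μ / 2 * ‖u‖ ^ 2))
    (τ : ℝ) (hτ₀ : 0 ≤ τ) (hτ₁ : τ ≤ 1) (a xt x : E) (xhat : E)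
    (hxhat : xhat = (1 - τ) • a + τ • xt) :
    h xhat + τ * ⟪h' xhat, x - xt⟫
      ≤ (1 - τ) * h a + τ * h x - μ * τ ^ 2 / 2 * ‖xt - x‖ ^ 2
        - μ * (1 - τ) * τ / 2 * ‖a - x‖ ^ 2 :=
  gradient_interpolation_estimate_general μ h h' hdiff hμconv τ hτ₀ hτ₁ a xt x xhat hxhat
end
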